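/- Let ε ∈ {−1, 1}, let I, J ⊆ ℝ be open intervals, D = I × J, and let ω, 𝔮 : D → ℝ be smooth and g : J → ℝ be smooth with g and g′ nowhere zero. Suppose that H(u,v) = 1/g(v), Q = 𝔮/2, R = ε𝔮/2 satisfy the Gauss equation (G₀) and the Codazzi equations (C₀) on D. Then ε = 1, ω_uv = 0 on D (the surface is flat and isothermic), 𝔮 is independent of v, and there exist α ∈ ℝ∖{0}, μ ∈ {−1, 1}, C₁, C₂ ∈ ℝ∖{0} with μ C₁ C₂ < 0 such that g(v) = C₁ e^{αv} and 𝔮(u,v) = C₂ e^{μαu}. -/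

import Mathlib

noncomputable section

/-- Partial derivative in the first variable. -/
def pd1 (f : ℝ → ℝ → ℝ) (u v : ℝ) : ℝ := deriv (fun x => f x v) u

/-- Partial derivative in the second variable. -/
def pd2 (f : ℝ → ℝ → ℝ) (u v : ℝ) : ℝ := deriv (fun y => f u y) v

/-- The Gauss equation (G_c) at a point. -/
def GaussEq (c : ℝ) (ω Q R H : ℝ → ℝ → ℝ) (u v : ℝ) : Prop :=
  pd2 (pd1 ω) u v + (1 / 2) * ((H u v) ^ 2 + c) * Real.exp (ω u v)
    - 2 * Q u v * R u v * Real.exp (-ω u v) = 0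

/-- The Codazzi equations (C_c) at a point. -/
def CodazziEq (ω Q R H : ℝ → ℝ → ℝ) (u v : ℝ) : Prop :=
  pd1 H u v = 2 * Real.exp (-ω u v) * pd2 Q u v ∧
  pd2 H u v = 2 * Real.exp (-ω u v) * pd1 R u v

/-- Smoothness of a two-variable function on a set. -/
def Smooth2 (f : ℝ → ℝ → ℝ) (s : Set (ℝ × ℝ)) : Prop :=
  ContDiffOn ℝ (⊤ : ℕ∞) (fun p : ℝ × ℝ => f p.1 p.2) s

/-!
The first Codazzi equation says `q_v = 0`. The second then gives `e^ω = -ε q_u g² / g'`, a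
product of a function of `u` and a function of `v`, so `ω` splits additively and `ω_uv = 0`.
The Gauss equation then reduces to `e^{2ω} = ε (q g)²`, which forces `ε = 1`, and comparing
the two expressions for `e^{2ω}` gives `(q_u / q)² = (g' / g)²`. A function of `u` equal to a
function of `v` is constant, so by continuity `g' / g = α` and `q_u / q = μ α` with `μ = ±1`;
integrating gives the exponentials, and `0 < e^ω = -μ q g` gives the sign condition.
-/

open Set Real Filter

lemma eq_mul_exp_of_deriv_eq_mul {s : Set ℝ} (hs : IsOpen s) (hs' : IsPreconnected s)
    {f : ℝ → ℝ} {α : ℝ} (hf : DifferentiableOn ℝ f s) (hf' : ∀ x ∈ s, deriv f x = α * f x)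
    {x₀ : ℝ} (hx₀ : x₀ ∈ s) :
    ∀ x ∈ s, f x = f x₀ * exp (-(α * x₀)) * exp (α * x) := by
  have hderiv : ∀ x ∈ s, HasDerivAt (fun t => f t * exp (-(α * t))) 0 x := fun x hx => by
    have hfx : HasDerivAt f (α * f x) x :=
      hf' x hx ▸ (hf.differentiableAt (hs.mem_nhds hx)).hasDerivAt
    have hexp : HasDerivAt (fun t => exp (-(α * t))) (exp (-(α * x)) * -(α * 1)) x :=
      ((hasDerivAt_id' x).const_mul α).neg.exp
    exact (hfx.mul hexp).congr_deriv (by ring)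
  intro x hx
  have hconst := hs.is_const_of_deriv_eq_zero hs'
    (fun y hy => (hderiv y hy).differentiableAt.differentiableWithinAt)
    (fun y hy => (hderiv y hy).deriv) hx hx₀
  rw [← hconst, mul_assoc, ← exp_add]
  simp

lemma exists_eqOn_const_of_sq_eq_sq {I J : Set ℝ} (hI : IsPreconnected I)
    (hJ : IsPreconnected J) {f h : ℝ → ℝ} (hf : ContinuousOn f I) (hh : ContinuousOn h J)
    (hsq : ∀ u ∈ I, ∀ v ∈ J, f u ^ 2 = h v ^ 2) {u₀ v₀ : ℝ} (hu₀ : u₀ ∈ I) (hv₀ : v₀ ∈ J)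
    (hh₀ : h v₀ ≠ 0) :
    ∃ α μ : ℝ, α ≠ 0 ∧ (μ = -1 ∨ μ = 1) ∧ (∀ u ∈ I, f u = μ * α) ∧ ∀ v ∈ J, h v = α := by
  obtain ⟨μ, hμ, hfu₀⟩ : ∃ μ : ℝ, (μ = -1 ∨ μ = 1) ∧ f u₀ = μ * h v₀ := by
    rcases eq_or_eq_neg_of_sq_eq_sq _ _ (hsq u₀ hu₀ v₀ hv₀) with h1 | h1
    · exact ⟨1, Or.inr rfl, by rw [h1, one_mul]⟩
    · exact ⟨-1, Or.inl rfl, by rw [h1, neg_one_mul]⟩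
  have hμα : μ * h v₀ ≠ 0 := mul_ne_zero (by rcases hμ with rfl | rfl <;> norm_num) hh₀
  refine ⟨h v₀, μ, hh₀, hμ, fun u hu => ?_, fun v hv => ?_⟩
  · refine hI.eq_of_sq_eq hf continuousOn_const (fun x hx => ?_) (fun _ => hμα) hu₀ hfu₀ hu
    change f x ^ 2 = (μ * h v₀) ^ 2
    rw [hsq x hx v₀ hv₀]
    rcases hμ with rfl | rfl <;> ring
  · exact hJ.eq_of_sq_eq hh continuousOn_const (fun x hx => (hsq u₀ hu₀ x hx).symm.trans
      (hsq u₀ hu₀ v₀ hv₀)) (fun _ => hh₀) hv₀ rfl hv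

lemma ContDiffOn.hasDerivAt_deriv {f : ℝ → ℝ} {s : Set ℝ} (hf : ContDiffOn ℝ (⊤ : ℕ∞) f s)
    (hs : IsOpen s) {x : ℝ} (hx : x ∈ s) : HasDerivAt f (deriv f x) x :=
  ((hf.differentiableOn (by simp)).differentiableAt (hs.mem_nhds hx)).hasDerivAt

section PDE

variable {I J : Set ℝ} {ω q : ℝ → ℝ → ℝ} {g : ℝ → ℝ} {ε u v : ℝ}

lemma Smooth2.contDiffOn_left (hq : Smooth2 q (I ×ˢ J)) (hv : v ∈ J) :
    ContDiffOn ℝ (⊤ : ℕ∞) (fun x => q x v) I :=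
  hq.comp (contDiff_id.prodMk contDiff_const).contDiffOn fun _ hx => mk_mem_prod hx hv

lemma Smooth2.contDiffOn_right (hq : Smooth2 q (I ×ˢ J)) (hu : u ∈ I) :
    ContDiffOn ℝ (⊤ : ℕ∞) (fun y => q u y) J :=
  hq.comp (contDiff_const.prodMk contDiff_id).contDiffOn fun _ hy => mk_mem_prod hu hy

lemma pd1_eq_of_eqOn (hI : IsOpen I) (hu : u ∈ I) {v' : ℝ} (h : ∀ x ∈ I, q x v = q x v') :
    pd1 q u v = pd1 q u v' :=
  EventuallyEq.deriv_eq (eventually_of_mem (hI.mem_nhds hu) h)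

lemma pd2_pd1_eq_zero_of_exp_eq_mul (hI : IsOpen I) (hJ : IsOpen J) {a b : ℝ → ℝ}
    (h : ∀ x ∈ I, ∀ y ∈ J, exp (ω x y) = a x * b y) (hu : u ∈ I) (hv : v ∈ J) :
    pd2 (pd1 ω) u v = 0 := by
  obtain ⟨ha, hb⟩ := mul_ne_zero_iff.mp (h u hu v hv ▸ exp_ne_zero (ω u v))
  have hsplit : ∀ y ∈ J, ∀ x ∈ I, ω x y = ω x v + (ω u y - ω u v) := fun y hy x hx =>
    exp_injective <| by
      rw [exp_add, exp_sub, h x hx y hy, h x hx v hv, h u hu y hy, h u hu v hv]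
      field_simp
  have hpd1 : ∀ y ∈ J, pd1 ω u y = pd1 ω u v := fun y hy => by
    rw [pd1, EventuallyEq.deriv_eq (eventually_of_mem (hI.mem_nhds hu) (hsplit y hy)),
      deriv_add_const]
    rfl
  rw [pd2, EventuallyEq.deriv_eq (eventually_of_mem (hJ.mem_nhds hv) hpd1),
    deriv_const]

lemma pd2_eq_zero_of_codazzi
    (h : CodazziEq ω (fun u v => q u v / 2) (fun u v => ε * q u v / 2) (fun _ v => 1 / g v) u v) :
    pd2 q u v = 0 := by
  have h1 := h.1
  simp only [pd1, pd2, deriv_const, deriv_div_const] at h1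
  rw [pd2]
  exact (mul_eq_zero.mp (by linarith : exp (-ω u v) * deriv (fun y => q u y) v = 0)).resolve_left
    (exp_ne_zero _)

lemma eq_of_codazzi (hJ : IsOpen J) (hJ' : IsPreconnected J) (hq : Smooth2 q (I ×ˢ J))
    (h : ∀ u ∈ I, ∀ v ∈ J, CodazziEq ω (fun u v => q u v / 2) (fun u v => ε * q u v / 2)
      (fun _ v => 1 / g v) u v) :
    ∀ u ∈ I, ∀ v ∈ J, ∀ v' ∈ J, q u v = q u v' := fun u hu _ hv _ hv' =>
  hJ.is_const_of_deriv_eq_zero hJ' ((hq.contDiffOn_right hu).differentiableOn (by simp))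
    (fun y hy => pd2_eq_zero_of_codazzi (h u hu y hy)) hv hv'

lemma exp_eq_of_codazzi {g' : ℝ} (hg : HasDerivAt g g' v) (hg0 : g v ≠ 0) (hg' : g' ≠ 0)
    (h : CodazziEq ω (fun u v => q u v / 2) (fun u v => ε * q u v / 2) (fun _ v => 1 / g v) u v) :
    exp (ω u v) = -ε * pd1 q u v * (g v ^ 2 / g') := by
  have hinv : deriv (fun y => 1 / g y) v = -g' / g v ^ 2 := by
    simpa only [one_div] using (hg.fun_inv hg0).deriv
  have h2 := h.2
  simp only [pd1, pd2, hinv, deriv_div_const, deriv_const_mul_field', exp_neg] at h2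
  rw [pd1]
  field_simp at h2 ⊢
  linear_combination -h2

lemma exp_sq_eq_of_gauss_of_flat
    (h : GaussEq 0 ω (fun u v => q u v / 2) (fun u v => ε * q u v / 2) (fun _ v => 1 / g v) u v)
    (hflat : pd2 (pd1 ω) u v = 0) (hg : g v ≠ 0) :
    exp (ω u v) ^ 2 = ε * (q u v * g v) ^ 2 := by
  rw [GaussEq, hflat, exp_neg] at h
  field_simp at h
  linear_combination h

lemma sq_div_eq_sq_div_of_exp_eq {E a Q G G' : ℝ} (hE : E = -a * (G ^ 2 / G'))
    (hsq : E ^ 2 = (Q * G) ^ 2) (hQ : Q ≠ 0) (hG : G ≠ 0) (hG' : G' ≠ 0) :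
    (a / Q) ^ 2 = (G' / G) ^ 2 := by
  subst hE
  field_simp at hsq ⊢
  linear_combination hsq

lemma exists_exp_of_exp_eq (hI : IsOpen I) (hI' : I.OrdConnected) (hJ : IsOpen J)
    (hJ' : J.OrdConnected) (hq : Smooth2 q (I ×ˢ J)) (hg : ContDiffOn ℝ (⊤ : ℕ∞) g J)
    (hg0 : ∀ v ∈ J, g v ≠ 0) (hg'0 : ∀ v ∈ J, deriv g v ≠ 0)
    (hq_const : ∀ u ∈ I, ∀ v ∈ J, ∀ v' ∈ J, q u v = q u v') {u₀ v₀ : ℝ} (hu₀ : u₀ ∈ I)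
    (hv₀ : v₀ ∈ J)
    (hexp : ∀ u ∈ I, ∀ v ∈ J, exp (ω u v) = -pd1 q u v₀ * (g v ^ 2 / deriv g v))
    (hsq : ∀ u ∈ I, ∀ v ∈ J, exp (ω u v) ^ 2 = (q u v * g v) ^ 2) :
    ∃ α μ C₁ C₂ : ℝ, α ≠ 0 ∧ (μ = -1 ∨ μ = 1) ∧ C₁ ≠ 0 ∧ C₂ ≠ 0 ∧ μ * C₁ * C₂ < 0 ∧
      (∀ v ∈ J, g v = C₁ * exp (α * v)) ∧
      (∀ u ∈ I, ∀ v ∈ J, q u v = C₂ * exp (μ * α * u)) := by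
  have hq0 : ∀ u ∈ I, ∀ v ∈ J, q u v ≠ 0 := fun u hu v hv h0 => by
    simpa [h0] using hsq u hu v hv
  have hqv₀ := hq.contDiffOn_left hv₀
  obtain ⟨α, μ, hα, hμ, hq_log, hg_log⟩ := exists_eqOn_const_of_sq_eq_sq
    (f := fun u => pd1 q u v₀ / q u v₀) (h := fun v => deriv g v / g v) hI'.isPreconnected
    hJ'.isPreconnected
    ((hqv₀.continuousOn_deriv_of_isOpen hI (by simp)).div hqv₀.continuousOn
      fun u hu => hq0 u hu v₀ hv₀)
    ((hg.continuousOn_deriv_of_isOpen hJ (by simp)).div hg.continuousOn hg0)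
    (fun u hu v hv => sq_div_eq_sq_div_of_exp_eq (hexp u hu v hv)
      (hq_const u hu v₀ hv₀ v hv ▸ hsq u hu v hv) (hq0 u hu v₀ hv₀) (hg0 v hv) (hg'0 v hv))
    hu₀ hv₀ (div_ne_zero (hg'0 v₀ hv₀) (hg0 v₀ hv₀))
  have hg' : ∀ v ∈ J, deriv g v = α * g v := fun v hv =>
    (div_eq_iff (hg0 v hv)).1 (hg_log v hv)
  have hq' : ∀ u ∈ I, pd1 q u v₀ = μ * α * q u v₀ := fun u hu =>
    (div_eq_iff (hq0 u hu v₀ hv₀)).1 (hq_log u hu)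
  have hsign : μ * g v₀ * q u₀ v₀ < 0 := by
    have h := hexp u₀ hu₀ v₀ hv₀
    rw [hq' u₀ hu₀, hg' v₀ hv₀] at h
    have h' : exp (ω u₀ v₀) = -(μ * g v₀ * q u₀ v₀) := by
      rw [h]
      field_simp [hg0 v₀ hv₀]
    linarith [exp_pos (ω u₀ v₀)]
  refine ⟨α, μ, g v₀ * exp (-(α * v₀)), q u₀ v₀ * exp (-(μ * α * u₀)), hα, hμ,
    mul_ne_zero (hg0 v₀ hv₀) (exp_ne_zero _), mul_ne_zero (hq0 u₀ hu₀ v₀ hv₀) (exp_ne_zero _),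
    ?_, eq_mul_exp_of_deriv_eq_mul hJ hJ'.isPreconnected (hg.differentiableOn (by simp)) hg' hv₀,
    fun u hu v hv => (hq_const u hu v hv v₀ hv₀).trans
      (eq_mul_exp_of_deriv_eq_mul hI hI'.isPreconnected (hqv₀.differentiableOn (by simp)) hq'
        hu₀ u hu)⟩
  calc μ * (g v₀ * exp (-(α * v₀))) * (q u₀ v₀ * exp (-(μ * α * u₀)))
      = μ * g v₀ * q u₀ v₀ * (exp (-(α * v₀)) * exp (-(μ * α * u₀))) := by ring
    _ < 0 := mul_neg_of_neg_of_pos hsign (mul_pos (exp_pos _) (exp_pos _))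

end PDE

theorem statement8_general
    (ε : ℝ) (hε : ε = -1 ∨ ε = 1)
    (I J : Set ℝ)
    (hIopen : IsOpen I) (hIint : I.OrdConnected) (hIne : I.Nonempty)
    (hJopen : IsOpen J) (hJint : J.OrdConnected) (hJne : J.Nonempty)
    (ω q : ℝ → ℝ → ℝ) (g : ℝ → ℝ)
    (hq : Smooth2 q (I ×ˢ J))
    (hg : ContDiffOn ℝ (⊤ : ℕ∞) g J)
    (hg0 : ∀ v ∈ J, g v ≠ 0)
    (hg'0 : ∀ v ∈ J, deriv g v ≠ 0)
    (hGauss : ∀ u ∈ I, ∀ v ∈ J,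
      GaussEq 0 ω (fun u v => q u v / 2) (fun u v => ε * q u v / 2)
        (fun u v => 1 / g v) u v)
    (hCodazzi : ∀ u ∈ I, ∀ v ∈ J,
      CodazziEq ω (fun u v => q u v / 2) (fun u v => ε * q u v / 2)
        (fun u v => 1 / g v) u v) :
    ε = 1 ∧
    (∀ u ∈ I, ∀ v ∈ J, pd2 (pd1 ω) u v = 0) ∧
    (∀ u ∈ I, ∀ v ∈ J, ∀ v' ∈ J, q u v = q u v') ∧
    (∃ α μ C₁ C₂ : ℝ, α ≠ 0 ∧ (μ = -1 ∨ μ = 1) ∧ C₁ ≠ 0 ∧ C₂ ≠ 0 ∧ μ * C₁ * C₂ < 0 ∧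
      (∀ v ∈ J, g v = C₁ * Real.exp (α * v)) ∧
      (∀ u ∈ I, ∀ v ∈ J, q u v = C₂ * Real.exp (μ * α * u))) := by
  obtain ⟨u₀, hu₀⟩ := hIne
  obtain ⟨v₀, hv₀⟩ := hJne
  have hq_const := eq_of_codazzi hJopen hJint.isPreconnected hq hCodazzi
  have hexp : ∀ u ∈ I, ∀ v ∈ J, exp (ω u v) = -ε * pd1 q u v₀ * (g v ^ 2 / deriv g v) :=
    fun u hu v hv => pd1_eq_of_eqOn hIopen hu (fun x hx => hq_const x hx v hv v₀ hv₀) ▸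
      exp_eq_of_codazzi (hg.hasDerivAt_deriv hJopen hv) (hg0 v hv) (hg'0 v hv) (hCodazzi u hu v hv)
  have hflat : ∀ u ∈ I, ∀ v ∈ J, pd2 (pd1 ω) u v = 0 := fun u hu v hv =>
    pd2_pd1_eq_zero_of_exp_eq_mul hIopen hJopen hexp hu hv
  have hsq : ∀ u ∈ I, ∀ v ∈ J, exp (ω u v) ^ 2 = ε * (q u v * g v) ^ 2 := fun u hu v hv =>
    exp_sq_eq_of_gauss_of_flat (hGauss u hu v hv) (hflat u hu v hv) (hg0 v hv)
  obtain rfl : ε = 1 := hε.resolve_left fun h => by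
    nlinarith [hsq u₀ hu₀ v₀ hv₀, exp_pos (ω u₀ v₀), sq_nonneg (q u₀ v₀ * g v₀)]
  simp only [neg_one_mul, one_mul] at hexp hsq
  exact ⟨rfl, hflat, hq_const, exists_exp_of_exp_eq hIopen hIint hJopen hJint hq hg hg0 hg'0
    hq_const hu₀ hv₀ hexp hsq⟩

/-- Proposition 5.1: a `±`isothermic timelike surface
(`Q = 𝔮/2`, `R = ε𝔮/2`) with Lorentz anti-holomorphic inverse mean curvature
`1/H = g(v)` (with `g, g′` nowhere zero) satisfies `ε = 1`, is flat,
`𝔮` depends only on `u`, and `g(v) = C₁e^{αv}`, `𝔮 = C₂e^{μαu}` with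
`μ ∈ {−1,1}`, `C₁, C₂ ≠ 0`, `μC₁C₂ < 0`. -/
theorem statement8
    (ε : ℝ) (hε : ε = -1 ∨ ε = 1)
    (I J : Set ℝ)
    (hIopen : IsOpen I) (hIint : I.OrdConnected) (hIne : I.Nonempty)
    (hJopen : IsOpen J) (hJint : J.OrdConnected) (hJne : J.Nonempty)
    (ω q : ℝ → ℝ → ℝ) (g : ℝ → ℝ)
    (hω : Smooth2 ω (I ×ˢ J)) (hq : Smooth2 q (I ×ˢ J))
    (hg : ContDiffOn ℝ (⊤ : ℕ∞) g J)
    (hg0 : ∀ v ∈ J, g v ≠ 0)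
    (hg'0 : ∀ v ∈ J, deriv g v ≠ 0)
    (hGauss : ∀ u ∈ I, ∀ v ∈ J,
      GaussEq 0 ω (fun u v => q u v / 2) (fun u v => ε * q u v / 2)
        (fun u v => 1 / g v) u v)
    (hCodazzi : ∀ u ∈ I, ∀ v ∈ J,
      CodazziEq ω (fun u v => q u v / 2) (fun u v => ε * q u v / 2)
        (fun u v => 1 / g v) u v) :
    ε = 1 ∧
    (∀ u ∈ I, ∀ v ∈ J, pd2 (pd1 ω) u v = 0) ∧
    (∀ u ∈ I, ∀ v ∈ J, ∀ v' ∈ J, q u v = q u v') ∧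
    (∃ α μ C₁ C₂ : ℝ, α ≠ 0 ∧ (μ = -1 ∨ μ = 1) ∧ C₁ ≠ 0 ∧ C₂ ≠ 0 ∧ μ * C₁ * C₂ < 0 ∧
      (∀ v ∈ J, g v = C₁ * Real.exp (α * v)) ∧
      (∀ u ∈ I, ∀ v ∈ J, q u v = C₂ * Real.exp (μ * α * u))) :=
  statement8_general ε hε I J hIopen hIint hIne hJopen hJint hJne ω q g hq hg hg0 hg'0 hGauss
    hCodazzi
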